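/- arXiv:2405.17041 — 4 statements merged into one kernel-verified Lean document; each statement's English description precedes it below -/
import Mathlib

section
/- Fix α ∈ ℝ and β > 0. For any s ∈ [0,1] and x ∈ ℝ, the quantity F(s) := (s·(β - α²)) - (x - αs)²/(1-s), viewed as a function of s ∈ [0,1) (the action of following γ_α(t)=αt up to time s and then going linearly to (1,x)), is maximized at s* = max{0, min{1, 1 - |x - α|/√β}} when β > 0, and the maximum value equals A_{α,β}(1,x). -/
open Set

/-- The limit shape `A_{α,β}(1,·)` of the parabolic Airy process conditioned to
be `β - α²` at the point `α`. -/
noncomputable def Afun (α β : ℝ) (x : ℝ) : ℝ :=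
  if x < α - Real.sqrt β then -x ^ 2
  else if x ≤ α then -2 * (α - Real.sqrt β) * x + (α - Real.sqrt β) ^ 2
  else if x ≤ α + Real.sqrt β then -2 * (α + Real.sqrt β) * x + (α + Real.sqrt β) ^ 2
  else -x ^ 2

lemma key_identity (α r x s : ℝ) (hs : s < 1) :
    s * (r ^ 2 - α ^ 2) - (x - α * s) ^ 2 / (1 - s)
      = r ^ 2 - α ^ 2 - 2 * α * (x - α)
        - ((1 - s) * r ^ 2 + (x - α) ^ 2 / (1 - s)) := by
  have h1 : (1 - s) ≠ 0 := by intro h; nlinarith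
  field_simp
  ring

/-- The action `F(s) = s(β-α²) - (x-αs)²/(1-s)` of following `γ_α` up to time `s`
and then going linearly to `(1,x)` is maximized at
`s* = max{0, min{1, 1 - |x-α|/√β}}`, with maximal value `A_{α,β}(1,x)`. -/
theorem optimal_switching_time (α β x : ℝ) (hβ : 0 < β) :
    (∀ s ∈ Ico (0 : ℝ) 1,
        s * (β - α ^ 2) - (x - α * s) ^ 2 / (1 - s) ≤
          (max 0 (min 1 (1 - |x - α| / Real.sqrt β))) * (β - α ^ 2)
            - (x - α * (max 0 (min 1 (1 - |x - α| / Real.sqrt β)))) ^ 2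
              / (1 - max 0 (min 1 (1 - |x - α| / Real.sqrt β)))) ∧
    (max 0 (min 1 (1 - |x - α| / Real.sqrt β))) * (β - α ^ 2)
        - (x - α * (max 0 (min 1 (1 - |x - α| / Real.sqrt β)))) ^ 2
          / (1 - max 0 (min 1 (1 - |x - α| / Real.sqrt β)))
      = Afun α β x := by
  have hr : 0 < Real.sqrt β := Real.sqrt_pos.mpr hβ
  set r := Real.sqrt β with hrdef
  have hr2 : r ^ 2 = β := Real.sq_sqrt hβ.le
  set d := x - α with hd
  have hkey : ∀ s : ℝ, s < 1 →
      s * (β - α ^ 2) - (x - α * s) ^ 2 / (1 - s)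
        = r ^ 2 - α ^ 2 - 2 * α * d - ((1 - s) * r ^ 2 + d ^ 2 / (1 - s)) := by
    intro s hs
    rw [← hr2, hd]
    exact key_identity α r x s hs
  by_cases hcase : r ≤ |d|
  · -- s* = 0, value -x²
    have hd2 : r ^ 2 ≤ d ^ 2 := by
      have := abs_nonneg d
      nlinarith [sq_abs d]
    have ht : 1 - |d| / r ≤ 0 := by
      have : 1 ≤ |d| / r := (one_le_div hr).mpr hcase
      linarith
    have hsstar : max 0 (min 1 (1 - |d| / r)) = 0 := by
      rw [min_eq_right (le_trans ht zero_le_one), max_eq_left ht]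
    rw [hsstar]
    have hval : (0 : ℝ) * (β - α ^ 2) - (x - α * 0) ^ 2 / (1 - 0) = -x ^ 2 := by
      norm_num
    rw [hval]
    constructor
    · intro s hs
      obtain ⟨hs0, hs1⟩ := hs
      rw [hkey s hs1]
      have hneg : -x ^ 2 = r ^ 2 - α ^ 2 - 2 * α * d - (1 * r ^ 2 + d ^ 2 / 1) := by
        rw [hd]; ring
      rw [hneg]
      have hu : 0 < 1 - s := by linarith
      have h2 : 1 * r ^ 2 + d ^ 2 / 1 ≤ (1 - s) * r ^ 2 + d ^ 2 / (1 - s) := by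
        rw [← sub_nonneg]
        have heq : (1 - s) * r ^ 2 + d ^ 2 / (1 - s) - (1 * r ^ 2 + d ^ 2 / 1)
            = s * (d ^ 2 - (1 - s) * r ^ 2) / (1 - s) := by
          field_simp; ring
        rw [heq]
        apply div_nonneg _ hu.le
        apply mul_nonneg hs0
        nlinarith
      linarith
    · -- Afun = -x² when |d| ≥ r
      unfold Afun
      rw [← hrdef]
      rcases abs_cases d with ⟨habs, hdpos⟩ | ⟨habs, hdneg⟩
      · -- d ≥ 0, so x ≥ α + r
        have hx : α + r ≤ x := by rw [hd] at habs; nlinarith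
        rw [if_neg (by push_neg; nlinarith), if_neg (by push_neg; nlinarith)]
        by_cases hxe : x ≤ α + r
        · have : x = α + r := le_antisymm hxe hx
          rw [if_pos hxe, this]; ring
        · rw [if_neg hxe]
      · -- d ≤ 0, so x ≤ α - r
        have hx : x ≤ α - r := by rw [hd] at habs; nlinarith
        by_cases hxe : x < α - r
        · rw [if_pos hxe]
        · have hxeq : x = α - r := le_antisymm hx (le_of_not_gt hxe)
          rw [if_neg hxe, if_pos (by nlinarith), hxeq]; ring
  · push_neg at hcase
    have habsnn : 0 ≤ |d| := abs_nonneg d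
    by_cases hd0 : d = 0
    · -- x = α, s* = 1, value β - α²
      have hxα : x = α := by rw [hd] at hd0; linarith
      have hsstar : max 0 (min 1 (1 - |d| / r)) = 1 := by
        rw [hd0]; simp
      rw [hsstar]
      have hval : (1 : ℝ) * (β - α ^ 2) - (x - α * 1) ^ 2 / (1 - 1) = β - α ^ 2 := by
        rw [hxα]; norm_num
      rw [hval]
      constructor
      · intro s hs
        obtain ⟨hs0, hs1⟩ := hs
        rw [hkey s hs1, hd0]
        have hu : 0 < 1 - s := by linarith
        have : 0 ≤ (1 - s) * r ^ 2 + (0:ℝ) ^ 2 / (1 - s) := by positivity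
        nlinarith
      · unfold Afun
        rw [← hrdef, hxα]
        rw [if_neg (by push_neg; nlinarith), if_pos le_rfl]
        nlinarith
    · -- 0 < |d| < r, s* = 1 - |d|/r ∈ (0,1)
      have habs : 0 < |d| := abs_pos.mpr hd0
      have ht0 : 0 < 1 - |d| / r := by
        have : |d| / r < 1 := (div_lt_one hr).mpr hcase
        linarith
      have ht1 : 1 - |d| / r ≤ 1 := by
        have : 0 ≤ |d| / r := div_nonneg habsnn hr.le
        linarith
      have hsstar : max 0 (min 1 (1 - |d| / r)) = 1 - |d| / r := by
        rw [min_eq_right ht1, max_eq_right ht0.le]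
      rw [hsstar]
      have hlt1 : 1 - |d| / r < 1 := by
        have : 0 < |d| / r := div_pos habs hr
        linarith
      have hu : 1 - (1 - |d| / r) = |d| / r := by ring
      have hval : (1 - |d| / r) * (β - α ^ 2) - (x - α * (1 - |d| / r)) ^ 2 / (1 - (1 - |d| / r))
          = r ^ 2 - α ^ 2 - 2 * α * d - 2 * r * |d| := by
        rw [hkey _ hlt1, hu]
        have h1 : |d| / r * r ^ 2 + d ^ 2 / (|d| / r) = 2 * r * |d| := by
          rw [← sq_abs d]
          field_simp
          norm_num
        rw [h1]
      rw [hval]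
      constructor
      · intro s hs
        obtain ⟨hs0, hs1⟩ := hs
        rw [hkey s hs1]
        have hus : 0 < 1 - s := by linarith
        have h2 : 2 * r * |d| ≤ (1 - s) * r ^ 2 + d ^ 2 / (1 - s) := by
          rw [← sub_nonneg, ← sq_abs d]
          have heq : (1 - s) * r ^ 2 + |d| ^ 2 / (1 - s) - 2 * r * |d|
              = ((1 - s) * r - |d|) ^ 2 / (1 - s) := by
            field_simp
            linarith [sq_abs d]
          rw [heq]; positivity
        linarith
      · unfold Afun
        rw [← hrdef]
        rcases lt_or_ge α x with hxgt | hxle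
        · -- d > 0 case: branch 3
          have hdpos : 0 < d := by rw [hd]; linarith
          have habs' : |d| = d := abs_of_pos hdpos
          have hc' : d < r := by rw [habs'] at hcase; exact hcase
          have hx1 : ¬ x < α - r := by push_neg; linarith
          have hx2 : ¬ x ≤ α := not_le.mpr hxgt
          have hx3 : x ≤ α + r := by rw [hd] at hc'; linarith
          rw [if_neg hx1, if_neg hx2, if_pos hx3, habs', hd]; ring
        · -- d < 0 case: branch 2
          have hdneg : d < 0 := lt_of_le_of_ne (by rw [hd]; linarith) hd0
          have habs' : |d| = -d := abs_of_neg hdneg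
          have hc' : -d < r := by rw [habs'] at hcase; exact hcase
          have hx1 : ¬ x < α - r := by push_neg; rw [hd] at hc'; linarith
          rw [if_neg hx1, if_pos hxle, habs', hd]; ring
end

section
/- Let I = {α} with α ∈ ℝ and f(α) = β - α² with β > 0. Then the minimizer of (1/4)∫_ℝ ((φ')² - 4x²) dx over continuous φ: ℝ → ℝ with φ ≥ -x², φ(α) = β - α², φ in H^1 on some [-c,c], and φ(x) = -x² outside [-c,c], is φ = A_{α,β}(1,·), and the minimal value is (4/3)β^{3/2}. -/
open Set MeasureTheory

open intervalIntegral Metric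
open scoped Topology

noncomputable def AD (α β : ℝ) (x : ℝ) : ℝ :=
  if x < α - Real.sqrt β then -2 * x
  else if x < α then -2 * (α - Real.sqrt β)
  else if x ≤ α + Real.sqrt β then -2 * (α + Real.sqrt β) else -2 * x

section
variable {α β : ℝ}

/-- closed form of `Afun` as parabola plus tent. -/
lemma Afun_eq (x : ℝ) :
    Afun α β x = -x ^ 2 + (max (Real.sqrt β - |x - α|) 0) ^ 2 := by
  set s := Real.sqrt β with hs
  have hs0 : 0 ≤ s := Real.sqrt_nonneg β
  unfold Afun
  rcases lt_or_ge x (α - s) with h1 | h1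
  · have hx : |x - α| = -(x - α) := abs_of_neg (by linarith)
    rw [if_pos h1, max_eq_right (by rw [hx]; linarith)]
    ring
  · rw [if_neg (not_lt.2 h1)]
    rcases le_or_gt x α with h2 | h2
    · rw [if_pos h2, abs_of_nonpos (by linarith : x - α ≤ 0),
        max_eq_left (by linarith : (0:ℝ) ≤ s - -(x - α))]
      ring
    · rw [if_neg (not_le.2 h2)]
      rcases le_or_gt x (α + s) with h3 | h3
      · rw [if_pos h3, abs_of_pos (by linarith : 0 < x - α),
          max_eq_left (by linarith : (0:ℝ) ≤ s - (x - α))]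
        ring
      · rw [if_neg (not_le.2 h3), max_eq_right (by
          rw [abs_of_pos (by linarith : 0 < x - α)]; linarith)]
        ring

lemma Afun_cont : Continuous (Afun α β) := by
  have : (Afun α β) = fun x => -x ^ 2 + (max (Real.sqrt β - |x - α|) 0) ^ 2 :=
    funext fun x => Afun_eq x
  rw [this]; fun_prop

lemma Afun_ge (x : ℝ) : -x ^ 2 ≤ Afun α β x := by
  rw [Afun_eq]; nlinarith [sq_nonneg (max (Real.sqrt β - |x - α|) 0)]

lemma Afun_at (hβ : 0 < β) : Afun α β α = β - α ^ 2 := by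
  rw [Afun_eq]
  simp [abs_of_nonneg, max_eq_left (Real.sqrt_nonneg β), Real.sq_sqrt hβ.le]
  ring

lemma Afun_out {x : ℝ} (hx : x ≤ α - Real.sqrt β ∨ α + Real.sqrt β ≤ x) :
    Afun α β x = -x ^ 2 := by
  have h0 : max (Real.sqrt β - |x - α|) 0 = 0 := by
    rcases hx with h | h
    · exact max_eq_right (by rw [abs_of_nonpos (by nlinarith [Real.sqrt_nonneg β] : x - α ≤ 0)]; linarith)
    · exact max_eq_right (by rw [abs_of_nonneg (by nlinarith [Real.sqrt_nonneg β] : 0 ≤ x - α)]; linarith)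
  rw [Afun_eq, h0]; ring
end

section
variable {α β : ℝ}

lemma AD_meas : Measurable (AD α β) := by
  unfold AD
  refine Measurable.ite (measurableSet_lt measurable_id measurable_const) (by fun_prop) ?_
  refine Measurable.ite (measurableSet_lt measurable_id measurable_const) (by fun_prop) ?_
  exact Measurable.ite (measurableSet_le measurable_id measurable_const) (by fun_prop) (by fun_prop)

lemma AD_bound {x : ℝ} : |AD α β x| ≤ 2 * |x| + 2 * (|α| + Real.sqrt β) := by
  have hs0 : 0 ≤ Real.sqrt β := Real.sqrt_nonneg β
  have h1 : |(-2 : ℝ) * x| = 2 * |x| := by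
    rw [abs_mul]; norm_num
  have h2 : |(-2 : ℝ) * (α - Real.sqrt β)| ≤ 2 * (|α| + Real.sqrt β) := by
    rw [abs_mul]
    have := abs_sub α (Real.sqrt β)
    have : |α - Real.sqrt β| ≤ |α| + Real.sqrt β := by
      calc |α - Real.sqrt β| ≤ |α| + |Real.sqrt β| := abs_sub _ _
      _ = |α| + Real.sqrt β := by rw [abs_of_nonneg hs0]
    norm_num; linarith
  have h3 : |(-2 : ℝ) * (α + Real.sqrt β)| ≤ 2 * (|α| + Real.sqrt β) := by
    rw [abs_mul]
    have : |α + Real.sqrt β| ≤ |α| + Real.sqrt β := by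
      calc |α + Real.sqrt β| ≤ |α| + |Real.sqrt β| := abs_add_le _ _
      _ = |α| + Real.sqrt β := by rw [abs_of_nonneg hs0]
    norm_num; linarith
  have hx0 : 0 ≤ |x| := abs_nonneg x
  unfold AD
  split_ifs
  · rw [h1]; linarith [abs_nonneg α]
  · linarith
  · linarith
  · rw [h1]; linarith [abs_nonneg α]
end

section
variable {α β : ℝ}

lemma AD_intInt (p q : ℝ) : IntervalIntegrable (AD α β) volume p q := by
  refine IntervalIntegrable.mono_fun'
    (g := fun x => 2 * |x| + 2 * (|α| + Real.sqrt β)) ?_ ?_ ?_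
  · exact (Continuous.intervalIntegrable (by fun_prop) p q)
  · exact (AD_meas.aestronglyMeasurable).restrict
  · exact Filter.Eventually.of_forall (fun x => AD_bound)

lemma AD_sq_intInt (p q : ℝ) : IntervalIntegrable (fun x => (AD α β x) ^ 2) volume p q := by
  refine IntervalIntegrable.mono_fun'
    (g := fun x => (2 * |x| + 2 * (|α| + Real.sqrt β)) ^ 2) ?_ ?_ ?_
  · exact (Continuous.intervalIntegrable (by fun_prop) p q)
  · exact ((AD_meas.pow_const 2).aestronglyMeasurable).restrict
  · refine Filter.Eventually.of_forall (fun x => ?_)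
    have h := @AD_bound α β x
    have h2 : 0 ≤ |AD α β x| := abs_nonneg _
    simp only [Real.norm_eq_abs]
    rw [abs_of_nonneg (sq_nonneg _), ← sq_abs]
    nlinarith
end

section
variable {α β : ℝ}

lemma hasDeriv_neg_sq (x : ℝ) : HasDerivAt (fun y : ℝ => -y ^ 2) (-2 * x) x := by
  have := (hasDerivAt_pow 2 x).neg
  exact (this.congr_deriv (by ring) : HasDerivAt (fun y : ℝ => -y ^ 2) (-2 * x) x)

lemma hasDeriv_lin (k x : ℝ) : HasDerivAt (fun y : ℝ => -2 * k * y + k ^ 2) (-2 * k) x := by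
  simpa using ((hasDerivAt_id x).const_mul (-2 * k)).add_const (k ^ 2)
end

section
variable {α β : ℝ}

lemma Afun_hasDeriv (hβ : 0 < β) (x : ℝ) :
    HasDerivWithinAt (Afun α β) (AD α β x) (Ioi x) x := by
  set s := Real.sqrt β with hsdef
  have hs : 0 < s := Real.sqrt_pos.2 hβ
  have hs2 : s ^ 2 = β := Real.sq_sqrt hβ.le
  set a := α - s with ha
  set b := α + s with hb
  have hab : a < α := by simp [ha]; linarith
  have hαb : α < b := by simp [hb]; linarith
  rcases lt_or_ge x a with h1 | h1
  · -- x < a : parabola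
    have hAD : AD α β x = -2 * x := if_pos h1
    rw [hAD]
    refine ((hasDeriv_neg_sq x).hasDerivWithinAt).congr_of_eventuallyEq ?_ ?_
    · filter_upwards [nhdsWithin_le_nhds (Iio_mem_nhds h1)] with y hy
      exact if_pos hy
    · exact if_pos h1
  rcases lt_or_ge x α with h2 | h2
  · -- a ≤ x < α : left line
    have hAD : AD α β x = -2 * a := by rw [AD, if_neg (not_lt.2 h1), if_pos h2]
    rw [hAD]
    refine ((hasDeriv_lin a x).hasDerivWithinAt).congr_of_eventuallyEq ?_ ?_
    · filter_upwards [nhdsWithin_le_nhds (Iio_mem_nhds h2),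
        self_mem_nhdsWithin] with y hy (hy' : y ∈ Ioi x)
      rw [Afun, if_neg (by push_neg; linarith [mem_Ioi.1 hy'] : ¬ y < a), if_pos hy.le]
    · rw [Afun, if_neg (not_lt.2 h1), if_pos h2.le]
  rcases lt_or_ge x b with h3 | h3
  rcases eq_or_lt_of_le h2 with h2' | h2'
  · -- x = α : right line, right derivative
    have hAD : AD α β x = -2 * b := by
      rw [AD, if_neg (by push_neg; linarith : ¬ x < a), if_neg (not_lt.2 h2), if_pos h3.le]
    rw [hAD]
    refine ((hasDeriv_lin b x).hasDerivWithinAt).congr_of_eventuallyEq ?_ ?_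
    · filter_upwards [nhdsWithin_le_nhds (Iio_mem_nhds h3),
        self_mem_nhdsWithin] with y hy (hy' : y ∈ Ioi x)
      have hyα : α < y := by rw [h2']; exact hy'
      rw [Afun, if_neg (by push_neg; linarith : ¬ y < a), if_neg (not_le.2 hyα), if_pos hy.le]
    · rw [Afun, if_neg (by push_neg; linarith : ¬ x < a), if_pos (le_of_eq h2'.symm)]
      rw [← h2', hb, hsdef]; ring
  · -- α < x < b : right line
    have hAD : AD α β x = -2 * b := by
      rw [AD, if_neg (by push_neg; linarith : ¬ x < a), if_neg (not_lt.2 h2), if_pos h3.le]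
    rw [hAD]
    refine ((hasDeriv_lin b x).hasDerivWithinAt).congr_of_eventuallyEq ?_ ?_
    · filter_upwards [nhdsWithin_le_nhds (Iio_mem_nhds h3),
        self_mem_nhdsWithin] with y hy (hy' : y ∈ Ioi x)
      have hyα : α < y := lt_trans h2' hy'
      rw [Afun, if_neg (by push_neg; linarith : ¬ y < a), if_neg (not_le.2 hyα), if_pos hy.le]
    · rw [Afun, if_neg (by push_neg; linarith : ¬ x < a), if_neg (not_le.2 h2'), if_pos h3.le]
  · -- b ≤ x : parabola
    have hAD : AD α β x = -2 * x := by
      rw [AD, if_neg (by push_neg; linarith : ¬ x < a), if_neg (by push_neg; linarith : ¬ x < α)]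
      rcases eq_or_lt_of_le h3 with h3' | h3'
      · rw [if_pos (le_of_eq h3'.symm)]
        rw [← h3']
      · rw [if_neg (not_le.2 h3')]
    rw [hAD]
    refine ((hasDeriv_neg_sq x).hasDerivWithinAt).congr_of_eventuallyEq ?_ ?_
    · filter_upwards [self_mem_nhdsWithin] with y (hy : y ∈ Ioi x)
      have hyb : b < y := lt_of_le_of_lt h3 hy
      rw [Afun, if_neg (by push_neg; linarith : ¬ y < a), if_neg (by push_neg; linarith),
        if_neg (not_le.2 hyb)]
    · rcases eq_or_lt_of_le h3 with h3' | h3'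
      · rw [Afun, if_neg (by push_neg; linarith : ¬ x < a), if_neg (by push_neg; linarith),
          if_pos (le_of_eq h3'.symm)]
        rw [← h3']; ring
      · rw [Afun, if_neg (by push_neg; linarith : ¬ x < a), if_neg (by push_neg; linarith),
          if_neg (not_le.2 h3')]
end

section
variable {α β : ℝ}

lemma Afun_ftc (hβ : 0 < β) (p q : ℝ) :
    Afun α β q - Afun α β p = ∫ r in p..q, AD α β r :=
  (intervalIntegral.integral_eq_sub_of_hasDeriv_right (Afun_cont.continuousOn)
    (fun x _ => Afun_hasDeriv hβ x) (AD_intInt p q)).symm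

lemma ae_ne (z : ℝ) : ∀ᵐ r : ℝ, r ≠ z := by
  refine (MeasureTheory.ae_iff).2 ?_
  simpa [not_not] using measure_singleton z

lemma integral_congr_off_pt {f g : ℝ → ℝ} {p q z : ℝ}
    (h : ∀ r ∈ Set.uIoc p q, r ≠ z → f r = g r) :
    ∫ r in p..q, f r = ∫ r in p..q, g r := by
  apply intervalIntegral.integral_congr_ae
  filter_upwards [ae_ne z] with r hr hmem using h r hmem hr

lemma poly_int (c p q : ℝ) :
    ∫ r in p..q, (c - 4 * r ^ 2) = c * (q - p) - (4 / 3) * (q ^ 3 - p ^ 3) := by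
  rw [intervalIntegral.integral_sub (intervalIntegrable_const)
    ((Continuous.intervalIntegrable (by fun_prop) p q))]
  rw [intervalIntegral.integral_const, intervalIntegral.integral_const_mul, integral_pow]
  simp only [smul_eq_mul]
  push_cast
  ring

lemma Efun_intInt (p q : ℝ) :
    IntervalIntegrable (fun r => (AD α β r) ^ 2 - 4 * r ^ 2) volume p q :=
  (AD_sq_intInt p q).sub (Continuous.intervalIntegrable (by fun_prop) p q)

lemma energy_AD (hβ : 0 < β) {C : ℝ} (hC : |α| + Real.sqrt β ≤ C) :
    ∫ r in (-C)..C, ((AD α β r) ^ 2 - 4 * r ^ 2) = (16 / 3) * Real.sqrt β ^ 3 := by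
  set s := Real.sqrt β with hsdef
  have hs : 0 < s := Real.sqrt_pos.2 hβ
  set a := α - s with ha
  set b := α + s with hb
  have hCa : -C ≤ a := by have := abs_le.1 (le_of_eq rfl : |α| ≤ |α|); have := neg_abs_le α; simp [ha]; linarith
  have hbC : b ≤ C := by have := le_abs_self α; simp [hb]; linarith
  have hab : a < α := by simp [ha]; linarith
  have hαb : α < b := by simp [hb]; linarith
  set f : ℝ → ℝ := fun r => (AD α β r) ^ 2 - 4 * r ^ 2 with hf
  have hsplit : ∫ r in (-C)..C, f r =
      (((∫ r in (-C)..a, f r) + ∫ r in a..α, f r) + ∫ r in α..b, f r) + ∫ r in b..C, f r := by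
    rw [intervalIntegral.integral_add_adjacent_intervals (Efun_intInt _ _) (Efun_intInt _ _),
      intervalIntegral.integral_add_adjacent_intervals (Efun_intInt _ _) (Efun_intInt _ _),
      intervalIntegral.integral_add_adjacent_intervals (Efun_intInt _ _) (Efun_intInt _ _)]
  have hout : ∀ r : ℝ, r ≤ a ∨ b ≤ r → f r = 0 := by
    intro r hr
    have hAD : AD α β r = -2 * r := by
      rw [AD]
      rcases hr with h | h
      · rcases lt_or_eq_of_le h with h' | h'
        · rw [if_pos h']
        · rw [if_neg (by simp [h'] : ¬ r < a), if_pos (by rw [h']; exact hab)]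
          rw [h']
      · rw [if_neg (by push_neg; linarith : ¬ r < a), if_neg (by push_neg; linarith : ¬ r < α)]
        rcases eq_or_lt_of_le h with h' | h'
        · rw [if_pos (le_of_eq h'.symm), ← h']
        · rw [if_neg (not_le.2 h')]
    simp [hf, hAD]; ring
  have h1 : ∫ r in (-C)..a, f r = 0 := by
    rw [intervalIntegral.integral_congr (g := fun _ => 0) ?_, intervalIntegral.integral_zero]
    intro r hr
    rw [Set.uIcc_of_le hCa] at hr
    exact hout r (Or.inl hr.2)
  have h4 : ∫ r in b..C, f r = 0 := by
    rw [intervalIntegral.integral_congr (g := fun _ => 0) ?_, intervalIntegral.integral_zero]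
    intro r hr
    rw [Set.uIcc_of_le hbC] at hr
    exact hout r (Or.inr hr.1)
  have h2 : ∫ r in a..α, f r = 4 * a ^ 2 * (α - a) - (4 / 3) * (α ^ 3 - a ^ 3) := by
    have key : ∀ r ∈ Set.uIoc a α, r ≠ α → f r = 4 * a ^ 2 - 4 * r ^ 2 := by
      intro r hr hrα
      rw [Set.uIoc_of_le hab.le] at hr
      have hADr : AD α β r = -2 * a := by
        rw [AD, if_neg (not_lt.2 hr.1.le), if_pos (lt_of_le_of_ne hr.2 hrα)]
      simp [hf, hADr]; ring
    rw [integral_congr_off_pt key, poly_int]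
  have h3 : ∫ r in α..b, f r = 4 * b ^ 2 * (b - α) - (4 / 3) * (b ^ 3 - α ^ 3) := by
    have key : Set.EqOn f (fun r => 4 * b ^ 2 - 4 * r ^ 2) (Set.uIcc α b) := by
      intro r hr
      rw [Set.uIcc_of_le hαb.le] at hr
      have hADr : AD α β r = -2 * b := by
        rw [AD, if_neg (by push_neg; linarith [hr.1] : ¬ r < a),
          if_neg (not_lt.2 hr.1), if_pos hr.2]
      simp [hf, hADr]; ring
    rw [intervalIntegral.integral_congr key, poly_int]
  rw [hsplit, h1, h2, h3, h4, ha, hb]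
  ring

lemma s_cube (hβ : 0 < β) : Real.sqrt β ^ 3 = β ^ ((3 : ℝ) / 2) := by
  rw [Real.sqrt_eq_rpow, ← Real.rpow_natCast (β ^ ((1:ℝ)/2)) 3, ← Real.rpow_mul hβ.le]
  norm_num
end

/-- Integration by parts for FTC-representable functions, via Fubini. -/
lemma parts_lemma {f fd : ℝ → ℝ} (hcf : Continuous f)
    {p q : ℝ} (hf : ∀ x y : ℝ, p ≤ x → x ≤ y → y ≤ q → f y - f x = ∫ r in x..y, fd r)
    (hpq : p ≤ q) (hint : IntervalIntegrable fd volume p q) :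
    ∫ r in p..q, r * fd r = q * f q - p * f p - ∫ r in p..q, f r := by
  set μ := volume.restrict (Ioc p q) with hμ
  haveI : IsFiniteMeasure μ := ⟨by
    rw [hμ, Measure.restrict_apply_univ]; exact measure_Ioc_lt_top⟩
  have hfdμ : Integrable fd μ := (intervalIntegrable_iff_integrableOn_Ioc_of_le hpq).1 hint
  set F : ℝ → ℝ → ℝ := fun r t => if r < t then fd t else 0 with hF
  have hFeq : Function.uncurry F = Set.indicator {z : ℝ × ℝ | z.1 < z.2} (fun z => fd z.2) := by
    funext z
    simp only [Function.uncurry, hF, Set.indicator_apply, Set.mem_setOf_eq]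
  have hFmeas : AEStronglyMeasurable (Function.uncurry F) (μ.prod μ) := by
    rw [hFeq]
    exact (hfdμ.aestronglyMeasurable.comp_snd).indicator
      (measurableSet_lt measurable_fst measurable_snd)
  have hFint : Integrable (Function.uncurry F) (μ.prod μ) := by
    rw [integrable_prod_iff hFmeas]
    constructor
    · refine Filter.Eventually.of_forall (fun r => ?_)
      have : (fun t => F r t) = Set.indicator (Ioi r) fd := by
        funext t; simp [hF, Set.indicator_apply]
      show Integrable (fun t => Function.uncurry F (r, t)) μ
      simp only [Function.uncurry]
      rw [this]
      exact hfdμ.indicator measurableSet_Ioi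
    · refine Integrable.mono' (g := fun _ => ∫ t, ‖fd t‖ ∂μ) (integrable_const _)
        (hFmeas.norm.integral_prod_right') ?_
      refine Filter.Eventually.of_forall (fun r => ?_)
      have hle : ∫ t, ‖Function.uncurry F (r, t)‖ ∂μ ≤ ∫ t, ‖fd t‖ ∂μ := by
        refine integral_mono_of_nonneg (Filter.Eventually.of_forall fun t => norm_nonneg _)
          hfdμ.norm (Filter.Eventually.of_forall fun t => ?_)
        simp only [Function.uncurry, hF]
        split_ifs <;> simp
      have h0 : 0 ≤ ∫ t, ‖Function.uncurry F (r, t)‖ ∂μ :=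
        integral_nonneg fun t => norm_nonneg _
      rw [Real.norm_eq_abs, abs_of_nonneg h0]
      exact hle
  have hswap : ∫ r, ∫ t, F r t ∂μ ∂μ = ∫ t, ∫ r, F r t ∂μ ∂μ :=
    integral_integral_swap hFint
  -- LHS : ∫ r in Ioc p q, (f q - f r)
  have hLHS : ∫ r, ∫ t, F r t ∂μ ∂μ = ∫ r in Ioc p q, (f q - f r) := by
    rw [hμ]
    refine setIntegral_congr_fun measurableSet_Ioc (fun r hr => ?_)
    have h1 : (fun t => F r t) = Set.indicator (Ioi r) fd := by
      funext t; simp [hF, Set.indicator_apply]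
    rw [h1, MeasureTheory.integral_indicator measurableSet_Ioi, Measure.restrict_restrict measurableSet_Ioi]
    have h2 : Ioi r ∩ Ioc p q = Ioc r q := by
      ext t
      simp only [mem_inter_iff, mem_Ioi, mem_Ioc]
      exact ⟨fun ⟨h, _, h'⟩ => ⟨h, h'⟩, fun ⟨h, h'⟩ => ⟨h, lt_trans hr.1 h, h'⟩⟩
    rw [h2, ← intervalIntegral.integral_of_le hr.2, ← hf r q hr.1.le hr.2 le_rfl]
  -- RHS : ∫ t in Ioc p q, (t - p) * fd t
  have hRHS : ∫ t, ∫ r, F r t ∂μ ∂μ = ∫ t in Ioc p q, (t - p) * fd t := by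
    rw [hμ]
    refine setIntegral_congr_fun measurableSet_Ioc (fun t ht => ?_)
    have h1 : (fun r => F r t) = Set.indicator (Iio t) (fun _ => fd t) := by
      funext r; simp [hF, Set.indicator_apply]
    rw [h1, MeasureTheory.integral_indicator measurableSet_Iio, Measure.restrict_restrict measurableSet_Iio]
    have h2 : Iio t ∩ Ioc p q = Ioo p t := by
      ext r
      simp only [mem_inter_iff, mem_Iio, mem_Ioo, mem_Ioc]
      exact ⟨fun ⟨h, h', _⟩ => ⟨h', h⟩, fun ⟨h, h'⟩ => ⟨h', h, le_trans h'.le ht.2⟩⟩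
    rw [h2, setIntegral_const, Real.volume_real_Ioo_of_le (by linarith [ht.1] : p ≤ t)]
    simp [smul_eq_mul]
  have hfint : IntervalIntegrable f volume p q := hcf.intervalIntegrable p q
  have htfd : IntervalIntegrable (fun t => t * fd t) volume p q :=
    hint.continuousOn_mul continuousOn_id
  -- assemble
  have hL : ∫ r in Ioc p q, (f q - f r) = (q - p) * f q - ∫ r in p..q, f r := by
    rw [← intervalIntegral.integral_of_le hpq,
      intervalIntegral.integral_sub (intervalIntegrable_const) hfint,
      intervalIntegral.integral_const]
    simp [smul_eq_mul]
  have hR : ∫ t in Ioc p q, (t - p) * fd t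
      = (∫ t in p..q, t * fd t) - p * (f q - f p) := by
    rw [← intervalIntegral.integral_of_le hpq]
    have : ∀ t : ℝ, (t - p) * fd t = t * fd t - p * fd t := fun t => by ring
    rw [intervalIntegral.integral_congr (fun t _ => this t), intervalIntegral.integral_sub htfd
      (hint.const_mul p), intervalIntegral.integral_const_mul, ← hf p q le_rfl hpq le_rfl]
  rw [hLHS, hRHS, hL, hR] at hswap
  linarith [hswap]

/-- If an integrable function has vanishing integral over all subintervals of `(u,v)`
and vanishes outside `(u,v)`, it is a.e. zero. -/
lemma ae_zero_of_subintervals {g : ℝ → ℝ} {u v : ℝ}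
    (hg : Integrable g volume)
    (hzero : ∀ p q : ℝ, u < p → p ≤ q → q < v → ∫ r in p..q, g r = 0)
    (hsupp : ∀ x, x ∉ Ioo u v → g x = 0) :
    ∀ᵐ x : ℝ, g x = 0 := by
  filter_upwards [IsUnifLocDoublingMeasure.ae_tendsto_average (μ := (volume : Measure ℝ))
    hg.locallyIntegrable 1] with x hx
  by_cases hmem : x ∈ Ioo u v
  · have hxmem : ∀ᶠ δ in 𝓝[>] (0:ℝ), x ∈ closedBall x (1 * δ) := by
      filter_upwards [self_mem_nhdsWithin] with δ (hδ : δ ∈ Ioi (0:ℝ))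
      exact mem_closedBall_self (by simpa using (le_of_lt hδ))
    have hxlim := hx (fun _ : ℝ => x) id Filter.tendsto_id hxmem
    have hε : (0:ℝ) < min (x - u) (v - x) := by
      simp only [lt_min_iff]
      exact ⟨by linarith [hmem.1], by linarith [hmem.2]⟩
    have heq : ∀ᶠ δ in 𝓝[>] (0:ℝ), ⨍ y in closedBall x δ, g y = 0 := by
      filter_upwards [Ioo_mem_nhdsGT_of_mem ⟨le_refl (0:ℝ), hε⟩] with δ hδ
      have h1 : u < x - δ := by
        have := hδ.2; have := lt_min_iff.1 this; linarith [this.1]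
      have h2 : x + δ < v := by
        have := lt_min_iff.1 hδ.2; linarith [this.2]
      have h3 : x - δ ≤ x + δ := by linarith [hδ.1]
      have hI : ∫ y in closedBall x δ, g y = 0 := by
        rw [Real.closedBall_eq_Icc, integral_Icc_eq_integral_Ioc,
          ← intervalIntegral.integral_of_le h3]
        exact hzero _ _ h1 h3 h2
      rw [setAverage_eq, hI, smul_zero]
    have h0 : Filter.Tendsto (fun _ : ℝ => (0:ℝ)) (𝓝[>] (0:ℝ)) (𝓝 (g x)) :=
      hxlim.congr' (heq.mono fun δ h => h)
    exact (tendsto_nhds_unique h0 tendsto_const_nhds)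
  · exact hsupp x hmem


/-- The admissible class for the Brownian-motion rate functional: continuous
profiles above the parabola with value `β - α²` at `α`, agreeing with `-x²`
outside `[-c,c]`, and `H¹` (encoded by an a.e. derivative `φd` via FTC, with
`φd` square integrable). -/
def Admissible (α β : ℝ) (φ φd : ℝ → ℝ) (c : ℝ) : Prop :=
  Continuous φ ∧ (∀ x : ℝ, -x ^ 2 ≤ φ x) ∧ φ α = β - α ^ 2 ∧ 0 < c ∧
  (∀ x : ℝ, c ≤ |x| → φ x = -x ^ 2) ∧
  (∀ p q : ℝ, φ q - φ p = ∫ r in p..q, φd r) ∧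
  IntervalIntegrable (fun r => (φd r) ^ 2) volume (-c) c

/-- The energy `E_BM(φ) = (1/4)∫((φ')² - 4x²)`. -/
noncomputable def Energy (φd : ℝ → ℝ) (c : ℝ) : ℝ :=
  (1 / 4) * ∫ r in (-c)..c, ((φd r) ^ 2 - 4 * r ^ 2)

set_option maxHeartbeats 1000000 in
/-- The unique minimizer of the Brownian rate functional over profiles pinned to
`β - α²` at `α` is `A_{α,β}(1,·)`, with minimal value `(4/3)β^{3/2}`. -/
theorem variational_one_point (α β : ℝ) (hβ : 0 < β) :
    (∃ Ad : ℝ → ℝ, ∃ c : ℝ, Admissible α β (Afun α β) Ad c ∧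
      Energy Ad c = (4 / 3) * β ^ ((3 : ℝ) / 2)) ∧
    (∀ φ φd : ℝ → ℝ, ∀ c : ℝ, Admissible α β φ φd c →
      (4 / 3) * β ^ ((3 : ℝ) / 2) ≤ Energy φd c ∧
      (Energy φd c = (4 / 3) * β ^ ((3 : ℝ) / 2) → φ = Afun α β)) := by
  have hs : 0 < Real.sqrt β := Real.sqrt_pos.2 hβ
  have hs2 : Real.sqrt β ^ 2 = β := Real.sq_sqrt hβ.le
  have habs0 : 0 ≤ |α| := abs_nonneg α
  have habs1 : α ≤ |α| := le_abs_self α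
  have habs2 : -|α| ≤ α := neg_abs_le α
  constructor
  · -- existence
    refine ⟨AD α β, |α| + Real.sqrt β + 1,
      ⟨Afun_cont, Afun_ge, Afun_at hβ, by positivity, ?_, fun p q => Afun_ftc hβ p q,
        AD_sq_intInt _ _⟩, ?_⟩
    · intro x hx
      rcases le_or_gt 0 x with h | h
      · rw [abs_of_nonneg h] at hx
        exact Afun_out (Or.inr (by linarith))
      · rw [abs_of_neg h] at hx
        exact Afun_out (Or.inl (by linarith))
    · rw [Energy, energy_AD hβ (by linarith : |α| + Real.sqrt β ≤ |α| + Real.sqrt β + 1),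
        s_cube hβ]
      ring
  · -- lower bound and uniqueness
    rintro φ φd c ⟨hcont, hge, hA, hc, hout, hftc, hsq⟩
    set C := c + |α| + Real.sqrt β + 1 with hCdef
    have hcC : c ≤ C := by rw [hCdef]; linarith
    have hCpos : 0 < C := lt_of_lt_of_le hc hcC
    have haC : -C ≤ α - Real.sqrt β := by rw [hCdef]; linarith
    have hbC : α + Real.sqrt β ≤ C := by rw [hCdef]; linarith
    have hαC : -C ≤ α ∧ α ≤ C := ⟨by linarith, by linarith⟩
    have hφC : φ C = -C ^ 2 := hout C (by rw [abs_of_pos hCpos]; linarith)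
    have hφnC : φ (-C) = -C ^ 2 := by
      rw [hout (-C) (by rw [abs_neg, abs_of_pos hCpos]; linarith)]; ring
    -- φd is integrable on [-C, C+1]
    have hφdInt : IntegrableOn φd (Ioc (-C) (C + 1)) volume := by
      by_contra hni
      have h0 : ∫ r in (-C)..(C + 1), φd r = 0 := by
        rw [intervalIntegral.integral_of_le (by linarith), MeasureTheory.integral_undef hni]
      have h1 := hftc (-C) (C + 1)
      rw [h0, hout (C + 1) (by rw [abs_of_pos (by linarith)]; linarith), hφnC] at h1
      nlinarith
    have IIφd : ∀ p q : ℝ, -C ≤ p → p ≤ C → -C ≤ q → q ≤ C →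
        IntervalIntegrable φd volume p q := by
      intro p q h1 h2 h3 h4
      rw [intervalIntegrable_iff]
      exact hφdInt.mono_set (Set.Ioc_subset_Ioc (le_min h1 h3) (le_trans (max_le h2 h4) (by linarith)))
    -- identification of φd with -2x outside [-c,c]
    have hid : ∀ u v : ℝ, -C ≤ u → v ≤ C → (∀ x, u < x → x < v → c ≤ |x|) →
        ∀ᵐ x : ℝ, x ∈ Ioo u v → φd x = -2 * x := by
      intro u v huC hvC hcabs
      rcases lt_or_ge u v with huv | huv
      · have hIoo : IntegrableOn (fun r => φd r + 2 * r) (Ioo u v) volume := by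
          refine Integrable.add ?_ ?_
          · exact ((intervalIntegrable_iff_integrableOn_Ioc_of_le huv.le).1
              (IIφd u v huC (by linarith) (by linarith) hvC)).mono_set Ioo_subset_Ioc_self
          · exact (((continuous_const.mul continuous_id).intervalIntegrable u v).1).mono_set
              Ioo_subset_Ioc_self
        have hz : ∀ p q : ℝ, u < p → p ≤ q → q < v →
            ∫ r in p..q, (Ioo u v).indicator (fun r => φd r + 2 * r) r = 0 := by
          intro p q h1 h2 h3
          have hsub : ∀ r ∈ Set.uIcc p q,
              (Ioo u v).indicator (fun r => φd r + 2 * r) r = φd r + 2 * r := by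
            intro r hr
            rw [Set.uIcc_of_le h2] at hr
            exact Set.indicator_of_mem (show r ∈ Ioo u v from ⟨lt_of_lt_of_le h1 hr.1, lt_of_le_of_lt hr.2 h3⟩) _
          rw [intervalIntegral.integral_congr hsub,
            intervalIntegral.integral_add
              (IIφd p q (by linarith) (by linarith) (by linarith) (by linarith))
              (Continuous.intervalIntegrable (by fun_prop) p q),
            ← hftc p q, intervalIntegral.integral_const_mul, integral_id,
            hout p (hcabs p h1 (by linarith)), hout q (hcabs q (by linarith) h3)]
          ring
        filter_upwards [ae_zero_of_subintervals
          (hIoo.integrable_indicator measurableSet_Ioo) hz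
          (fun x hx => Set.indicator_of_notMem hx _)] with x hx hmem
        have h2 := Set.indicator_of_mem hmem (fun r => φd r + 2 * r)
        rw [hx] at h2
        linarith [h2.symm]
      · have hempty : Ioo u v = (∅ : Set ℝ) := Ioo_eq_empty (not_lt.2 huv)
        filter_upwards with x hx
        rw [hempty] at hx
        exact absurd hx (Set.notMem_empty x)
    have haeR : ∀ᵐ x : ℝ, x ∈ Ioo c C → φd x = -2 * x :=
      hid c C (by linarith) le_rfl
        (fun x hx _ => by rw [abs_of_pos (lt_trans hc hx)]; linarith)
    have haeL : ∀ᵐ x : ℝ, x ∈ Ioo (-C) (-c) → φd x = -2 * x :=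
      hid (-C) (-c) le_rfl (by linarith)
        (fun x _ hx => by rw [abs_of_neg (by linarith : x < 0)]; linarith)
    -- side integrals, integrability
    have haeR' : (fun r => 4 * r ^ 2) =ᵐ[volume.restrict (Ioc c C)] (fun r => φd r ^ 2) := by
      filter_upwards [ae_restrict_of_ae haeR, ae_restrict_of_ae (ae_ne C),
        ae_restrict_mem measurableSet_Ioc] with x h1 h2 h3
      rw [h1 ⟨h3.1, lt_of_le_of_ne h3.2 h2⟩]; ring
    have haeL' : (fun r => 4 * r ^ 2) =ᵐ[volume.restrict (Ioc (-C) (-c))]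
        (fun r => φd r ^ 2) := by
      filter_upwards [ae_restrict_of_ae haeL, ae_restrict_of_ae (ae_ne (-c)),
        ae_restrict_mem measurableSet_Ioc] with x h1 h2 h3
      rw [h1 ⟨h3.1, lt_of_le_of_ne h3.2 h2⟩]; ring
    have hIntR : IntervalIntegrable (fun r => φd r ^ 2) volume c C := by
      rw [intervalIntegrable_iff_integrableOn_Ioc_of_le hcC]
      exact Integrable.congr ((Continuous.intervalIntegrable
        (by fun_prop : Continuous fun r : ℝ => 4 * r ^ 2) c C).1.mono_set
        subset_rfl) haeR'
    have hIntL : IntervalIntegrable (fun r => φd r ^ 2) volume (-C) (-c) := by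
      rw [intervalIntegrable_iff_integrableOn_Ioc_of_le (by linarith)]
      exact Integrable.congr ((Continuous.intervalIntegrable
        (by fun_prop : Continuous fun r : ℝ => 4 * r ^ 2) (-C) (-c)).1.mono_set
        subset_rfl) haeL'
    have hZR : ∫ r in c..C, (φd r ^ 2 - 4 * r ^ 2) = 0 := by
      rw [intervalIntegral.integral_of_le hcC]
      have h2 : ∫ r in Ioc c C, (φd r ^ 2 - 4 * r ^ 2) = ∫ r in Ioc c C, (0:ℝ) := by
        apply MeasureTheory.integral_congr_ae
        filter_upwards [haeR'] with x h1
        rw [← h1]; ring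
      rw [h2]; simp
    have hZL : ∫ r in (-C)..(-c), (φd r ^ 2 - 4 * r ^ 2) = 0 := by
      rw [intervalIntegral.integral_of_le (by linarith : -C ≤ -c)]
      have h2 : ∫ r in Ioc (-C) (-c), (φd r ^ 2 - 4 * r ^ 2) = ∫ r in Ioc (-C) (-c), (0:ℝ) := by
        apply MeasureTheory.integral_congr_ae
        filter_upwards [haeL'] with x h1
        rw [← h1]; ring
      rw [h2]; simp
    have hcontSq : Continuous fun r : ℝ => 4 * r ^ 2 := by fun_prop
    have hsqc' : IntervalIntegrable (fun r => φd r ^ 2 - 4 * r ^ 2) volume (-c) c :=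
      hsq.sub (hcontSq.intervalIntegrable _ _)
    have hsqR' : IntervalIntegrable (fun r => φd r ^ 2 - 4 * r ^ 2) volume c C :=
      hIntR.sub (hcontSq.intervalIntegrable _ _)
    have hsqL' : IntervalIntegrable (fun r => φd r ^ 2 - 4 * r ^ 2) volume (-C) (-c) :=
      hIntL.sub (hcontSq.intervalIntegrable _ _)
    have hext : ∫ r in (-C)..C, (φd r ^ 2 - 4 * r ^ 2)
        = ∫ r in (-c)..c, (φd r ^ 2 - 4 * r ^ 2) := by
      have e1 := intervalIntegral.integral_add_adjacent_intervals hsqL' hsqc'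
      have e2 := intervalIntegral.integral_add_adjacent_intervals (hsqL'.trans hsqc') hsqR'
      rw [← e2, ← e1, hZL, hZR]
      ring
    -- L² facts on [-C,C]
    have hsqC : IntervalIntegrable (fun r => φd r ^ 2) volume (-C) C :=
      (hIntL.trans hsq).trans hIntR
    have hφdmeasC : AEStronglyMeasurable φd (volume.restrict (Set.uIoc (-C) C)) := by
      apply hφdInt.aestronglyMeasurable.mono_set
      rw [Set.uIoc_of_le (by linarith : -C ≤ C)]
      exact Set.Ioc_subset_Ioc le_rfl (by linarith)
    have hdmeas : AEStronglyMeasurable (fun r => φd r - AD α β r)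
        (volume.restrict (Set.uIoc (-C) C)) :=
      hφdmeasC.sub AD_meas.aestronglyMeasurable.restrict
    have Ihd2 : IntervalIntegrable (fun r => (φd r - AD α β r) ^ 2) volume (-C) C := by
      refine IntervalIntegrable.mono_fun'
        (g := fun r => 2 * φd r ^ 2 + 2 * (AD α β r) ^ 2) ?_ ?_ ?_
      · exact (hsqC.const_mul 2).add ((AD_sq_intInt _ _).const_mul 2)
      · exact hdmeas.pow 2
      · refine Filter.Eventually.of_forall (fun r => ?_)
        simp only [Real.norm_eq_abs]
        rw [abs_of_nonneg (sq_nonneg _)]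
        nlinarith [sq_nonneg (φd r + AD α β r)]
    have IhdAD : IntervalIntegrable (fun r => AD α β r * (φd r - AD α β r)) volume (-C) C := by
      refine IntervalIntegrable.mono_fun'
        (g := fun r => (AD α β r) ^ 2 + (φd r - AD α β r) ^ 2) ?_ ?_ ?_
      · exact (AD_sq_intInt _ _).add Ihd2
      · exact AD_meas.aestronglyMeasurable.restrict.mul hdmeas
      · refine Filter.Eventually.of_forall (fun r => ?_)
        simp only [Real.norm_eq_abs]
        rw [abs_mul]
        nlinarith [sq_nonneg (|AD α β r| - |φd r - AD α β r|), sq_abs (AD α β r),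
          sq_abs (φd r - AD α β r), abs_nonneg (AD α β r), abs_nonneg (φd r - AD α β r)]
    -- quadratic expansion
    have hE4 : ∫ r in (-C)..C, (φd r ^ 2 - 4 * r ^ 2)
        = (∫ r in (-C)..C, (φd r - AD α β r) ^ 2)
          + 2 * (∫ r in (-C)..C, AD α β r * (φd r - AD α β r))
          + ∫ r in (-C)..C, ((AD α β r) ^ 2 - 4 * r ^ 2) := by
      rw [← intervalIntegral.integral_const_mul,
        ← intervalIntegral.integral_add Ihd2 (IhdAD.const_mul 2),
        ← intervalIntegral.integral_add (Ihd2.add (IhdAD.const_mul 2)) (Efun_intInt _ _)]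
      apply intervalIntegral.integral_congr
      intro r _
      ring
    -- the difference h and its FTC
    have hhf : Continuous (fun x => φ x - Afun α β x) := hcont.sub Afun_cont
    have hdftc : ∀ x y : ℝ, -C ≤ x → x ≤ y → y ≤ C →
        (φ y - Afun α β y) - (φ x - Afun α β x) = ∫ r in x..y, (φd r - AD α β r) := by
      intro x y h1 h2 h3
      rw [intervalIntegral.integral_sub (IIφd x y h1 (by linarith) (by linarith) h3)
        (AD_intInt x y), ← hftc x y, ← Afun_ftc hβ x y]
      ring
    have IIhd : ∀ p q : ℝ, -C ≤ p → p ≤ C → -C ≤ q → q ≤ C →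
        IntervalIntegrable (fun r => φd r - AD α β r) volume p q :=
      fun p q h1 h2 h3 h4 => (IIφd p q h1 h2 h3 h4).sub (AD_intInt p q)
    have hsubI : ∀ p q : ℝ, -C ≤ p → p ≤ C → -C ≤ q → q ≤ C → Set.uIoc p q ⊆ Set.uIoc (-C) C := by
      intro p q h1 h2 h3 h4 x hx
      rcases Set.mem_uIoc.1 hx with ⟨hl, hr⟩ | ⟨hl, hr⟩ <;>
        exact Set.mem_uIoc.2 (Or.inl ⟨by linarith, by linarith⟩)
    -- values of h
    have hhα : φ α - Afun α β α = 0 := by rw [hA, Afun_at hβ]; ring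
    have hhC : φ C - Afun α β C = 0 := by
      rw [hφC, Afun_out (Or.inr hbC)]; ring
    have hhnC : φ (-C) - Afun α β (-C) = 0 := by
      rw [hφnC, Afun_out (Or.inl haC)]; ring
    have hhge : ∀ x : ℝ, x ≤ α - Real.sqrt β ∨ α + Real.sqrt β ≤ x →
        0 ≤ φ x - Afun α β x := by
      intro x hx
      rw [Afun_out hx]
      have := hge x
      linarith
    -- cross term pieces
    have c1 : ∫ r in (-C)..(α - Real.sqrt β), AD α β r * (φd r - AD α β r)
        = -2 * (α - Real.sqrt β) * (φ (α - Real.sqrt β) - Afun α β (α - Real.sqrt β))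
          + 2 * ∫ r in (-C)..(α - Real.sqrt β), (φ r - Afun α β r) := by
      have key : ∀ r ∈ Set.uIcc (-C) (α - Real.sqrt β),
          AD α β r * (φd r - AD α β r) = -2 * (r * (φd r - AD α β r)) := by
        intro r hr
        rw [Set.uIcc_of_le haC] at hr
        have hAD : AD α β r = -2 * r := by
          rcases lt_or_eq_of_le hr.2 with h | h
          · rw [AD, if_pos h]
          · rw [AD, if_neg (by simp [h]), if_pos (by rw [h]; linarith), h]
        rw [hAD]; ring
      rw [intervalIntegral.integral_congr key, intervalIntegral.integral_const_mul,
        parts_lemma hhf (fun x y hx hxy hy => hdftc x y hx hxy (by linarith)) haC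
          (IIhd _ _ le_rfl (by linarith) haC (by linarith)), hhnC]
      ring
    have c2 : ∫ r in (α - Real.sqrt β)..α, AD α β r * (φd r - AD α β r)
        = 2 * (α - Real.sqrt β) * (φ (α - Real.sqrt β) - Afun α β (α - Real.sqrt β)) := by
      have key : ∀ r ∈ Set.uIoc (α - Real.sqrt β) α, r ≠ α →
          AD α β r * (φd r - AD α β r)
          = -2 * (α - Real.sqrt β) * (φd r - AD α β r) := by
        intro r hr hrα
        rw [Set.uIoc_of_le (by linarith)] at hr
        rw [AD, if_neg (not_lt.2 hr.1.le), if_pos (lt_of_le_of_ne hr.2 hrα)]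
      rw [integral_congr_off_pt key, intervalIntegral.integral_const_mul,
        ← hdftc (α - Real.sqrt β) α haC (by linarith) (by linarith), hhα]
      ring
    have c3 : ∫ r in α..(α + Real.sqrt β), AD α β r * (φd r - AD α β r)
        = -2 * (α + Real.sqrt β) * (φ (α + Real.sqrt β) - Afun α β (α + Real.sqrt β)) := by
      have key : ∀ r ∈ Set.uIcc α (α + Real.sqrt β),
          AD α β r * (φd r - AD α β r)
          = -2 * (α + Real.sqrt β) * (φd r - AD α β r) := by
        intro r hr
        rw [Set.uIcc_of_le (by linarith)] at hr
        rw [AD, if_neg (by push_neg; linarith [hr.1] : ¬ r < α - Real.sqrt β),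
          if_neg (not_lt.2 hr.1), if_pos hr.2]
      rw [intervalIntegral.integral_congr key, intervalIntegral.integral_const_mul,
        ← hdftc α (α + Real.sqrt β) (by linarith) (by linarith) hbC, hhα]
      ring
    have c4 : ∫ r in (α + Real.sqrt β)..C, AD α β r * (φd r - AD α β r)
        = 2 * (α + Real.sqrt β) * (φ (α + Real.sqrt β) - Afun α β (α + Real.sqrt β))
          + 2 * ∫ r in (α + Real.sqrt β)..C, (φ r - Afun α β r) := by
      have key : ∀ r ∈ Set.uIcc (α + Real.sqrt β) C,
          AD α β r * (φd r - AD α β r) = -2 * (r * (φd r - AD α β r)) := by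
        intro r hr
        rw [Set.uIcc_of_le hbC] at hr
        have hAD : AD α β r = -2 * r := by
          rcases lt_or_eq_of_le hr.1 with h | h
          · rw [AD, if_neg (by push_neg; linarith : ¬ r < α - Real.sqrt β),
              if_neg (by push_neg; linarith : ¬ r < α), if_neg (not_le.2 h)]
          · rw [AD, if_neg (by push_neg; linarith : ¬ r < α - Real.sqrt β),
              if_neg (by push_neg; linarith : ¬ r < α), if_pos (le_of_eq h.symm), ← h]
        rw [hAD]; ring
      rw [intervalIntegral.integral_congr key, intervalIntegral.integral_const_mul,
        parts_lemma hhf (fun x y hx hxy hy => hdftc x y (by linarith) hxy hy) hbC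
          (IIhd _ _ (by linarith) hbC (by linarith) le_rfl), hhC]
      ring
    have hsplit : ∫ r in (-C)..C, AD α β r * (φd r - AD α β r)
        = (((∫ r in (-C)..(α - Real.sqrt β), AD α β r * (φd r - AD α β r))
          + ∫ r in (α - Real.sqrt β)..α, AD α β r * (φd r - AD α β r))
          + ∫ r in α..(α + Real.sqrt β), AD α β r * (φd r - AD α β r))
          + ∫ r in (α + Real.sqrt β)..C, AD α β r * (φd r - AD α β r) := by
      have m : ∀ p q : ℝ, -C ≤ p → p ≤ C → -C ≤ q → q ≤ C →
          IntervalIntegrable (fun r => AD α β r * (φd r - AD α β r)) volume p q :=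
        fun p q h1 h2 h3 h4 => IhdAD.mono_set' (hsubI p q h1 h2 h3 h4)
      rw [intervalIntegral.integral_add_adjacent_intervals
          (m _ _ le_rfl (by linarith) haC (by linarith))
          (m _ _ haC (by linarith) hαC.1 hαC.2),
        intervalIntegral.integral_add_adjacent_intervals
          (m _ _ le_rfl (by linarith) hαC.1 hαC.2)
          (m _ _ hαC.1 hαC.2 (by linarith) hbC),
        intervalIntegral.integral_add_adjacent_intervals
          (m _ _ le_rfl (by linarith) (by linarith) hbC)
          (m _ _ (by linarith) hbC (by linarith) le_rfl)]
    have hIL : 0 ≤ ∫ r in (-C)..(α - Real.sqrt β), (φ r - Afun α β r) :=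
      intervalIntegral.integral_nonneg haC
        (fun u hu => hhge u (Or.inl hu.2))
    have hIR : 0 ≤ ∫ r in (α + Real.sqrt β)..C, (φ r - Afun α β r) :=
      intervalIntegral.integral_nonneg hbC
        (fun u hu => hhge u (Or.inr hu.1))
    have hQ : 0 ≤ ∫ r in (-C)..C, (φd r - AD α β r) ^ 2 :=
      intervalIntegral.integral_nonneg (by linarith) (fun u _ => sq_nonneg _)
    have henergy : ∫ r in (-C)..C, ((AD α β r) ^ 2 - 4 * r ^ 2)
        = 16 / 3 * Real.sqrt β ^ 3 := energy_AD hβ (by linarith)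
    have hcross : ∫ r in (-C)..C, AD α β r * (φd r - AD α β r)
        = 2 * ((∫ r in (-C)..(α - Real.sqrt β), (φ r - Afun α β r))
          + ∫ r in (α + Real.sqrt β)..C, (φ r - Afun α β r)) := by
      rw [hsplit, c1, c2, c3, c4]; ring
    have hEn : Energy φd c = (1 / 4) * ((∫ r in (-C)..C, (φd r - AD α β r) ^ 2)
        + 4 * ((∫ r in (-C)..(α - Real.sqrt β), (φ r - Afun α β r))
          + ∫ r in (α + Real.sqrt β)..C, (φ r - Afun α β r))
        + 16 / 3 * Real.sqrt β ^ 3) := by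
      rw [Energy, ← hext, hE4, hcross, henergy]; ring
    have hval : (4 / 3) * β ^ ((3 : ℝ) / 2) = (4 / 3) * Real.sqrt β ^ 3 := by
      rw [s_cube hβ]
    constructor
    · rw [hEn, hval]; linarith
    · intro heq
      rw [hEn] at heq
      rw [hval] at heq
      have hQ0 : ∫ r in (-C)..C, (φd r - AD α β r) ^ 2 = 0 := by linarith
      -- conclude hd = 0 a.e.
      have hae0 : ∀ᵐ r ∂(volume.restrict (Ioc (-C) C)), φd r - AD α β r = 0 := by
        have hint : Integrable (fun r => (φd r - AD α β r) ^ 2)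
            (volume.restrict (Ioc (-C) C)) :=
          (intervalIntegrable_iff_integrableOn_Ioc_of_le (by linarith)).1 Ihd2
        have h0 : ∫ r in Ioc (-C) C, (φd r - AD α β r) ^ 2 = 0 := by
          rw [← intervalIntegral.integral_of_le (by linarith : -C ≤ C)]
          exact hQ0
        have := (MeasureTheory.integral_eq_zero_iff_of_nonneg
          (fun r => sq_nonneg _) hint).1 h0
        filter_upwards [this] with r hr
        exact (pow_eq_zero_iff (by norm_num : (2:ℕ) ≠ 0)).1 hr
      have hzeroIcc : ∀ x ∈ Icc (-C) C, φ x - Afun α β x = 0 := by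
        intro x hx
        have hI : ∫ r in (-C)..x, (φd r - AD α β r) = 0 := by
          rw [intervalIntegral.integral_of_le hx.1]
          apply MeasureTheory.integral_eq_zero_of_ae
          exact ae_restrict_of_ae_restrict_of_subset
            (Set.Ioc_subset_Ioc le_rfl hx.2) hae0
        have := hdftc (-C) x le_rfl hx.1 hx.2
        rw [hI, hhnC] at this
        linarith
      funext x
      rcases le_or_gt x (-C) with hx | hx
      · rcases eq_or_lt_of_le hx with hx' | hx'
        · have := hzeroIcc x (by rw [hx']; exact ⟨le_rfl, by linarith⟩)
          linarith
        · rw [hout x (by rw [abs_of_neg (by linarith)]; linarith),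
            Afun_out (Or.inl (by linarith))]
      · rcases le_or_gt x C with hx2 | hx2
        · have := hzeroIcc x ⟨hx.le, hx2⟩
          linarith
        · rw [hout x (by rw [abs_of_pos (by linarith)]; linarith),
            Afun_out (Or.inr (by linarith))]
end

section
/- (Lower semicontinuity of the Dirichlet energy along uniform limits) Let η_n ∈ H^1[a,b] be paths converging uniformly to η ∈ H^1[a,b]. Then limsup_{n→∞} (-∫_a^b (η_n')² dt) ≤ -∫_a^b (η')² dt; equivalently, ∫(η')² ≤ liminf ∫(η_n')². -/
open Set Filter MeasureTheory

private lemma sq_int_expand (g : ℝ → ℝ) (p q c : ℝ)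
    (hg : IntervalIntegrable g volume p q)
    (hg2 : IntervalIntegrable (fun r => (g r)^2) volume p q) :
    IntervalIntegrable (fun r => (g r - c)^2) volume p q ∧
    (∫ r in p..q, (g r - c)^2) =
      (∫ r in p..q, (g r)^2) - 2*c*(∫ r in p..q, g r) + (q - p)*c^2 := by
  have hfe : (fun r => (g r - c)^2) = fun r => ((g r)^2 - (2*c)*(g r)) + c^2 := by
    funext r; ring
  have hint : IntervalIntegrable (fun r => ((g r)^2 - (2*c)*(g r)) + c^2) volume p q :=
    ((hg2.sub (hg.const_mul _)).add intervalIntegrable_const)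
  constructor
  · rw [hfe]; exact hint
  · rw [hfe, intervalIntegral.integral_add (hg2.sub (hg.const_mul _)) intervalIntegrable_const,
      intervalIntegral.integral_sub hg2 (hg.const_mul _), intervalIntegral.integral_const_mul,
      intervalIntegral.integral_const]
    simp only [smul_eq_mul]

private lemma cs_bound (g : ℝ → ℝ) (p q : ℝ) (hpq : p ≤ q)
    (hg : IntervalIntegrable g volume p q)
    (hg2 : IntervalIntegrable (fun r => (g r)^2) volume p q) :
    (∫ r in p..q, g r)^2 ≤ (q - p) * ∫ r in p..q, (g r)^2 := by
  rcases eq_or_lt_of_le hpq with h | h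
  · subst h; simp
  · set I := ∫ r in p..q, g r with hI
    set J := ∫ r in p..q, (g r)^2 with hJ
    have hd : 0 < q - p := by linarith
    have hnn : 0 ≤ ∫ r in p..q, (g r - I/(q-p))^2 :=
      intervalIntegral.integral_nonneg hpq (fun r _ => sq_nonneg _)
    rw [(sq_int_expand g p q (I/(q-p)) hg hg2).2] at hnn
    have h2 : J - 2*(I/(q-p))*I + (q-p)*(I/(q-p))^2 = J - I^2/(q-p) := by
      field_simp; ring
    rw [h2] at hnn
    have := (div_le_iff₀ hd).mp (by linarith : I^2/(q-p) ≤ J)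
    linarith

private lemma proj_bound (g : ℝ → ℝ) (p q c : ℝ) (hpq : p < q)
    (hg : IntervalIntegrable g volume p q)
    (hg2 : IntervalIntegrable (fun r => (g r)^2) volume p q) :
    (∫ r in p..q, (g r)^2) - (∫ r in p..q, g r)^2/(q-p)
      ≤ ∫ r in p..q, (g r - c)^2 := by
  rw [(sq_int_expand g p q c hg hg2).2]
  set I := ∫ r in p..q, g r with hI
  have hd : 0 < q - p := by linarith
  have key : 0 ≤ (I - c*(q-p))^2 / (q-p) := by positivity
  have heq : (I - c*(q-p))^2/(q-p) = I^2/(q-p) - 2*c*I + (q-p)*c^2 := by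
    field_simp; ring
  rw [heq] at key
  linarith

set_option maxHeartbeats 1000000 in
/-- Lower semicontinuity of the Dirichlet energy along uniform limits of `H¹`
paths: `limsup (-∫ (ηₙ')²) ≤ -∫ (η')²`, equivalently `∫(η')² ≤ liminf ∫(ηₙ')²`
(stated in the extended reals). -/
theorem dirichlet_energy_lsc (a b : ℝ) (hab : a ≤ b)
    (η : ℕ → ℝ → ℝ) (ηd : ℕ → ℝ → ℝ) (l ld : ℝ → ℝ)
    (hFTC : ∀ n, ∀ p ∈ Icc a b, ∀ q ∈ Icc a b, η n q - η n p = ∫ r in p..q, ηd n r)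
    (hInt : ∀ n, IntervalIntegrable (ηd n) volume a b)
    (hL2 : ∀ n, IntervalIntegrable (fun r => (ηd n r) ^ 2) volume a b)
    (hFTCl : ∀ p ∈ Icc a b, ∀ q ∈ Icc a b, l q - l p = ∫ r in p..q, ld r)
    (hIntl : IntervalIntegrable ld volume a b)
    (hL2l : IntervalIntegrable (fun r => (ld r) ^ 2) volume a b)
    (hunif : TendstoUniformlyOn (fun n => η n) l atTop (Icc a b)) :
    Filter.limsup (fun n => ((-∫ r in a..b, (ηd n r) ^ 2 : ℝ) : EReal)) atTop
      ≤ ((-∫ r in a..b, (ld r) ^ 2 : ℝ) : EReal) ∧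
    ((∫ r in a..b, (ld r) ^ 2 : ℝ) : EReal)
      ≤ Filter.liminf (fun n => ((∫ r in a..b, (ηd n r) ^ 2 : ℝ) : EReal)) atTop := by
  have key : ∀ ε : ℝ, 0 < ε → ∀ᶠ n in atTop,
      (∫ r in a..b, (ld r)^2) - ε ≤ ∫ r in a..b, (ηd n r)^2 := by
    intro ε hε
    rcases eq_or_lt_of_le hab with hab' | hab'
    · subst hab'
      filter_upwards with n
      simp only [intervalIntegral.integral_same]
      linarith
    -- density: approximate ld in L² on (a,b] by a continuous function φ
    set f : ℝ → ℝ := (Ioc a b).indicator ld with hf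
    have hmeasIoc : MeasurableSet (Ioc a b) := measurableSet_Ioc
    have hldmeas : AEStronglyMeasurable ld (volume.restrict (Ioc a b)) :=
      hIntl.1.aestronglyMeasurable
    have hmem_restrict : MemLp ld 2 (volume.restrict (Ioc a b)) :=
      (memLp_two_iff_integrable_sq hldmeas).2 hL2l.1
    have hfmem : MemLp f 2 volume := (memLp_indicator_iff_restrict hmeasIoc).2 hmem_restrict
    have h2p : MemLp f (ENNReal.ofReal 2) volume := by
      convert hfmem using 2
      norm_num [ENNReal.ofReal_ofNat]
    obtain ⟨φ, -, hφint, φcont, φmem2⟩ :=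
      h2p.exists_hasCompactSupport_integral_rpow_sub_le (by norm_num : (0:ℝ) < 2)
        (show (0:ℝ) < ε/8 by positivity)
    have φmem : MemLp φ 2 volume := by
      convert φmem2 using 2
      norm_num [ENNReal.ofReal_ofNat]
    -- convert the rpow bound to a squared bound over Ioc a b
    have hsq_int : Integrable (fun x => (f x - φ x)^2) volume := by
      have := (memLp_two_iff_integrable_sq (hfmem.sub φmem).aestronglyMeasurable).1
        (hfmem.sub φmem)
      simpa using this
    have hint2 : (∫ x, ‖f x - φ x‖ ^ (2:ℝ)) = ∫ x, (f x - φ x)^2 := by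
      congr 1; funext x
      rw [show ((2:ℝ)) = ((2:ℕ):ℝ) by norm_num, Real.rpow_natCast]
      simp [sq_abs]
    have hIoc : (∫ x in Ioc a b, (ld x - φ x)^2) ≤ ε/8 := by
      have h1 : (∫ x in Ioc a b, (ld x - φ x)^2) = ∫ x in Ioc a b, (f x - φ x)^2 :=
        setIntegral_congr_fun hmeasIoc (fun x hx => by simp [hf, indicator_of_mem hx])
      have h2 : (∫ x in Ioc a b, (f x - φ x)^2) ≤ ∫ x, (f x - φ x)^2 :=
        setIntegral_le_integral hsq_int (Eventually.of_forall fun x => sq_nonneg _)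
      rw [h1]
      calc (∫ x in Ioc a b, (f x - φ x)^2) ≤ ∫ x, (f x - φ x)^2 := h2
        _ = ∫ x, ‖f x - φ x‖ ^ (2:ℝ) := hint2.symm
        _ ≤ ε/8 := hφint
    -- uniform continuity of φ on [a,b]
    set θ : ℝ := Real.sqrt (ε/(8*(b-a))) with hθ
    have hba : (0:ℝ) < b - a := by linarith
    have hθpos : 0 < θ := Real.sqrt_pos.2 (div_pos hε (by linarith))
    have hθsq : θ^2 = ε/(8*(b-a)) := Real.sq_sqrt (le_of_lt (div_pos hε (by linarith)))
    obtain ⟨δ₀, hδ₀, hδimp⟩ := Metric.uniformContinuousOn_iff.1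
      (isCompact_Icc.uniformContinuousOn_of_continuous φcont.continuousOn) θ hθpos
    -- partition
    obtain ⟨m₀, hm₀⟩ := exists_nat_gt ((b-a)/δ₀)
    set m : ℕ := m₀ + 1 with hm
    have hmpos : (0:ℝ) < m := by positivity
    set Δ : ℝ := (b-a)/m with hΔ
    have hΔpos : 0 < Δ := by
      apply div_pos (by linarith) hmpos
    have hΔδ : Δ < δ₀ := by
      rw [hΔ, div_lt_iff₀ hmpos]
      have h1 : (b-a)/δ₀ < (m:ℝ) := by
        calc (b-a)/δ₀ < m₀ := hm₀
          _ ≤ m := by exact_mod_cast Nat.le_succ m₀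
      calc b - a = ((b-a)/δ₀) * δ₀ := by field_simp
        _ < m * δ₀ := by apply mul_lt_mul_of_pos_right h1 hδ₀
        _ = δ₀ * m := by ring
    set t : ℕ → ℝ := fun i => a + i * Δ with ht
    have ht0 : t 0 = a := by simp [ht]
    have htm : t m = b := by
      simp only [ht, hΔ]
      field_simp
      ring
    have htdiff : ∀ i : ℕ, t (i+1) - t i = Δ := by
      intro i; simp only [ht]; push_cast; ring
    have hmono : ∀ i : ℕ, t i ≤ t (i+1) := by
      intro i
      have := htdiff i; linarith
    have hmem : ∀ i : ℕ, i ≤ m → t i ∈ Icc a b := by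
      intro i hi
      constructor
      · simp only [ht]
        have : 0 ≤ (i:ℝ) * Δ := mul_nonneg (Nat.cast_nonneg i) hΔpos.le
        linarith
      · rw [← htm]; simp only [ht, add_le_add_iff_left]
        apply mul_le_mul_of_nonneg_right _ hΔpos.le
        exact_mod_cast hi
    have hsub : ∀ i : ℕ, i < m → uIcc (t i) (t (i+1)) ⊆ uIcc a b := by
      intro i hi
      rw [uIcc_of_le (hmono i), uIcc_of_le hab]
      exact Icc_subset_Icc (hmem i hi.le).1 (hmem (i+1) hi).2
    -- partial sums
    set S : ℝ := ∑ i ∈ Finset.range m, (l (t (i+1)) - l (t i))^2 / Δ with hS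
    set Sn : ℕ → ℝ := fun n => ∑ i ∈ Finset.range m, (η n (t (i+1)) - η n (t i))^2 / Δ with hSn
    -- Claim B : Sn n ≤ ∫ (ηd n)^2
    have hB : ∀ n, Sn n ≤ ∫ r in a..b, (ηd n r)^2 := by
      intro n
      have hints : ∀ k < m, IntervalIntegrable (fun r => (ηd n r)^2) volume (t k) (t (k+1)) :=
        fun k hk => (hL2 n).mono_set (hsub k hk)
      have hsplit := intervalIntegral.sum_integral_adjacent_intervals hints
      rw [ht0, htm] at hsplit
      rw [← hsplit, hSn]
      apply Finset.sum_le_sum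
      intro i hi
      rw [Finset.mem_range] at hi
      have hFTCi := hFTC n (t i) (hmem i hi.le) (t (i+1)) (hmem (i+1) hi)
      rw [hFTCi]
      have hcs := cs_bound (ηd n) (t i) (t (i+1)) (hmono i)
        ((hInt n).mono_set (hsub i hi)) ((hL2 n).mono_set (hsub i hi))
      rw [htdiff i] at hcs
      rw [div_le_iff₀ hΔpos]
      calc (∫ r in t i..t (i+1), ηd n r)^2 ≤ Δ * ∫ r in t i..t (i+1), (ηd n r)^2 := hcs
        _ = (∫ r in t i..t (i+1), (ηd n r)^2) * Δ := by ring
    -- Claim C : Sn → S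
    have htend : Tendsto Sn atTop (nhds S) := by
      rw [hSn, hS]
      apply tendsto_finset_sum
      intro i hi
      rw [Finset.mem_range] at hi
      have h1 : Tendsto (fun n => η n (t (i+1))) atTop (nhds (l (t (i+1)))) :=
        hunif.tendsto_at (hmem (i+1) hi)
      have h2 : Tendsto (fun n => η n (t i)) atTop (nhds (l (t i))) :=
        hunif.tendsto_at (hmem i hi.le)
      exact ((h1.sub h2).pow 2).div_const Δ
    -- Claim A : L - ε/2 ≤ S
    have hIIldφ2 : IntervalIntegrable (fun r => (ld r - φ r)^2) volume a b := by
      have hfe : (fun r => (ld r - φ r)^2)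
          = fun r => ((ld r)^2 - 2*(ld r * φ r)) + (φ r)^2 := by
        funext r; ring
      rw [hfe]
      exact ((hL2l.sub ((hIntl.mul_continuousOn φcont.continuousOn).const_mul 2)).add
        ((φcont.pow 2).intervalIntegrable a b))
    have hLS : (∫ r in a..b, (ld r)^2) - ε/2 ≤ S := by
      have hldints : ∀ k < m, IntervalIntegrable (fun r => (ld r)^2) volume (t k) (t (k+1)) :=
        fun k hk => hL2l.mono_set (hsub k hk)
      have hsplit := intervalIntegral.sum_integral_adjacent_intervals hldints
      rw [ht0, htm] at hsplit
      -- per piece bound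
      have hpiece : ∀ i ∈ Finset.range m,
          (∫ r in t i..t (i+1), (ld r)^2) - (l (t (i+1)) - l (t i))^2 / Δ
            ≤ 2 * (∫ r in t i..t (i+1), (ld r - φ r)^2) + 2 * (θ^2 * Δ) := by
        intro i hi
        rw [Finset.mem_range] at hi
        have hIldi : IntervalIntegrable ld volume (t i) (t (i+1)) :=
          hIntl.mono_set (hsub i hi)
        have hIld2i : IntervalIntegrable (fun r => (ld r)^2) volume (t i) (t (i+1)) :=
          hL2l.mono_set (hsub i hi)
        have hlt : t i < t (i+1) := by have := htdiff i; linarith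
        have hproj := proj_bound ld (t i) (t (i+1)) (φ (t i)) hlt hIldi hIld2i
        rw [htdiff i] at hproj
        rw [hFTCl (t i) (hmem i hi.le) (t (i+1)) (hmem (i+1) hi)]
        -- bound ∫ (ld - φ(t i))² by 2∫(ld-φ)² + 2∫(φ - φ(t i))²
        have hII1 : IntervalIntegrable (fun r => (ld r - φ (t i))^2) volume (t i) (t (i+1)) :=
          (sq_int_expand ld (t i) (t (i+1)) (φ (t i)) hIldi hIld2i).1
        have hII2 : IntervalIntegrable (fun r => (ld r - φ r)^2) volume (t i) (t (i+1)) :=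
          hIIldφ2.mono_set (hsub i hi)
        have hII3 : IntervalIntegrable (fun r => (φ r - φ (t i))^2) volume (t i) (t (i+1)) :=
          (((φcont.sub continuous_const).pow 2).intervalIntegrable _ _)
        have hmono1 : (∫ r in t i..t (i+1), (ld r - φ (t i))^2)
            ≤ ∫ r in t i..t (i+1), (2*(ld r - φ r)^2 + 2*(φ r - φ (t i))^2) := by
          apply intervalIntegral.integral_mono_on (hmono i) hII1
            ((hII2.const_mul 2).add (hII3.const_mul 2))
          intro x _
          nlinarith [sq_nonneg (ld x - φ x - (φ x - φ (t i))), sq_nonneg (ld x - φ x + (φ x - φ (t i)))]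
        have heq1 : (∫ r in t i..t (i+1), (2*(ld r - φ r)^2 + 2*(φ r - φ (t i))^2))
            = 2 * (∫ r in t i..t (i+1), (ld r - φ r)^2)
              + 2 * (∫ r in t i..t (i+1), (φ r - φ (t i))^2) := by
          rw [intervalIntegral.integral_add (hII2.const_mul 2) (hII3.const_mul 2),
            intervalIntegral.integral_const_mul, intervalIntegral.integral_const_mul]
        have hosc : (∫ r in t i..t (i+1), (φ r - φ (t i))^2) ≤ θ^2 * Δ := by
          have : (∫ r in t i..t (i+1), (φ r - φ (t i))^2)
              ≤ ∫ _r in t i..t (i+1), θ^2 := by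
            apply intervalIntegral.integral_mono_on (hmono i) hII3 intervalIntegrable_const
            intro x hx
            have hxIcc : x ∈ Icc a b := (Icc_subset_Icc (hmem i hi.le).1 (hmem (i+1) hi).2) hx
            have hdist : dist x (t i) < δ₀ := by
              rw [Real.dist_eq, abs_of_nonneg (by linarith [hx.1])]
              have := htdiff i
              calc x - t i ≤ t (i+1) - t i := by linarith [hx.2]
                _ = Δ := htdiff i
                _ < δ₀ := hΔδ
            have := hδimp x hxIcc (t i) (hmem i hi.le) hdist
            rw [Real.dist_eq] at this
            nlinarith [abs_nonneg (φ x - φ (t i)), sq_abs (φ x - φ (t i))]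
          calc (∫ r in t i..t (i+1), (φ r - φ (t i))^2) ≤ ∫ _r in t i..t (i+1), θ^2 := this
            _ = (t (i+1) - t i) * θ^2 := by
                rw [intervalIntegral.integral_const]; simp [smul_eq_mul]
            _ = θ^2 * Δ := by rw [htdiff i]; ring
        linarith
      -- sum up
      have hsum := Finset.sum_le_sum hpiece
      rw [Finset.sum_sub_distrib] at hsum
      have hsum2 : ∑ i ∈ Finset.range m,
          (2 * (∫ r in t i..t (i+1), (ld r - φ r)^2) + 2 * (θ^2 * Δ))
          = 2 * (∫ r in a..b, (ld r - φ r)^2) + 2 * (m * (θ^2 * Δ)) := by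
        rw [Finset.sum_add_distrib, Finset.sum_const, Finset.card_range,
          ← Finset.mul_sum]
        have hφsplit := intervalIntegral.sum_integral_adjacent_intervals
          (f := fun r => (ld r - φ r)^2) (μ := volume) (a := t) (n := m)
          (fun k hk => hIIldφ2.mono_set (hsub k hk))
        rw [ht0, htm] at hφsplit
        rw [hφsplit]
        push_cast
        ring
      rw [hsplit, hsum2] at hsum
      have hφbound : (∫ r in a..b, (ld r - φ r)^2) ≤ ε/8 := by
        rw [intervalIntegral.integral_of_le hab]
        exact hIoc
      have hθbound : 2 * ((m:ℝ) * (θ^2 * Δ)) = ε/4 := by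
        rw [hθsq, hΔ]
        field_simp
        ring
      have hSsum : S = ∑ i ∈ Finset.range m, (l (t (i+1)) - l (t i))^2 / Δ := hS
      rw [hSsum]
      linarith
    -- finish
    have hev : ∀ᶠ n in atTop, S - ε/2 ≤ Sn n := by
      filter_upwards [htend.eventually (eventually_gt_nhds (show S - ε/2 < S by linarith))]
        with n hn using hn.le
    filter_upwards [hev] with n hn
    calc (∫ r in a..b, (ld r)^2) - ε ≤ S - ε/2 := by linarith
      _ ≤ Sn n := hn
      _ ≤ ∫ r in a..b, (ηd n r)^2 := hB n
  -- assemble both EReal statements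
  set L : ℝ := ∫ r in a..b, (ld r)^2 with hL
  have tendL : ∀ c : ℝ, Tendsto (fun k : ℕ => ((c - 1/(k+1) : ℝ) : EReal)) atTop
      (nhds (c : EReal)) := by
    intro c
    rw [EReal.tendsto_coe]
    have : Tendsto (fun k : ℕ => (1:ℝ)/(k+1)) atTop (nhds 0) :=
      tendsto_one_div_add_atTop_nhds_zero_nat
    simpa using tendsto_const_nhds.sub this
  constructor
  · -- limsup part
    have h1 : ∀ ε : ℝ, 0 < ε →
        Filter.limsup (fun n => ((-∫ r in a..b, (ηd n r) ^ 2 : ℝ) : EReal)) atTop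
          ≤ ((-(L - ε) : ℝ) : EReal) := by
      intro ε hε
      apply Filter.limsup_le_of_le (by isBoundedDefault)
      filter_upwards [key ε hε] with n hn
      have : (-∫ r in a..b, (ηd n r) ^ 2 : ℝ) ≤ -(L - ε) := by
        rw [hL]; linarith
      exact_mod_cast this
    have htd : Tendsto (fun k : ℕ => ((-(L - 1/(k+1)) : ℝ) : EReal)) atTop
        (nhds ((-L : ℝ) : EReal)) := by
      rw [EReal.tendsto_coe]
      have h0 : Tendsto (fun k : ℕ => (1:ℝ)/(k+1)) atTop (nhds 0) :=
        tendsto_one_div_add_atTop_nhds_zero_nat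
      have hc : Tendsto (fun _ : ℕ => L) atTop (nhds L) := tendsto_const_nhds
      simpa using (hc.sub h0).neg
    exact ge_of_tendsto htd (Eventually.of_forall fun k => h1 (1/(k+1)) (by positivity))
  · -- liminf part
    have h2 : ∀ ε : ℝ, 0 < ε →
        ((L - ε : ℝ) : EReal)
          ≤ Filter.liminf (fun n => ((∫ r in a..b, (ηd n r) ^ 2 : ℝ) : EReal)) atTop := by
      intro ε hε
      apply Filter.le_liminf_of_le (by isBoundedDefault)
      filter_upwards [key ε hε] with n hn
      exact_mod_cast hn
    have htd : Tendsto (fun k : ℕ => ((L - 1/(k+1) : ℝ) : EReal)) atTop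
        (nhds ((L : ℝ) : EReal)) := by
      rw [EReal.tendsto_coe]
      have h0 : Tendsto (fun k : ℕ => (1:ℝ)/(k+1)) atTop (nhds 0) :=
        tendsto_one_div_add_atTop_nhds_zero_nat
      have hc : Tendsto (fun _ : ℕ => L) atTop (nhds L) := tendsto_const_nhds
      simpa using hc.sub h0
    exact le_of_tendsto htd (Eventually.of_forall fun k => h2 (1/(k+1)) (by positivity))
end

section
/- (Hopf–Lax preserves agreement with the parabola) Let f*: ℝ → ℝ be continuous with f*(x) ≥ -x² everywhere and f*(x) = -x² for |x| ≥ c. Define h*(t,x) := inf{ ∫_t^1 χ'(r)² dr + f*(χ(1)) : χ ∈ H^1[t,1], χ(t) = x }. Then h*(t,x) ≥ -x²/t for all (t,x) ∈ (0,1]×ℝ, and h*(t,x) = -x²/t whenever |x| ≥ ct. -/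
/-!
Along an admissible path from `(t, x)` to `(1, y)`, Cauchy–Schwarz bounds the kinetic energy
below by `(y - x)² / (1 - t)`, and
`(y - x)² / (1 - t) - y² + x² / t = (t y - x)² / (t (1 - t))`,
so `f ≥ -y²` gives every cost at least `-x² / t`. The straight path to `y = x / t` attains this
bound as soon as `f (x / t) = -(x / t)²`, which is the case when `|x| ≥ c t`.
-/

open Set MeasureTheory

/-- The backward Hopf–Lax evolution of `f` from time `1` to time `t`. -/
noncomputable def hstar (f : ℝ → ℝ) (t x : ℝ) : ℝ :=
  sInf {v : ℝ | ∃ χ χ' : ℝ → ℝ, χ t = x ∧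
    (∀ p ∈ Set.Icc t 1, ∀ q ∈ Set.Icc t 1, χ q - χ p = ∫ r in p..q, χ' r) ∧
    IntervalIntegrable χ' volume t 1 ∧
    IntervalIntegrable (fun r => (χ' r) ^ 2) volume t 1 ∧
    v = (∫ r in t..1, (χ' r) ^ 2) + f (χ 1)}

theorem intervalIntegral.sq_integral_le_mul_integral_sq {g : ℝ → ℝ} {a b : ℝ}
    (hab : a ≤ b) (hg : IntervalIntegrable g volume a b)
    (hg2 : IntervalIntegrable (fun r => g r ^ 2) volume a b) :
    (∫ r in a..b, g r) ^ 2 ≤ (b - a) * ∫ r in a..b, g r ^ 2 := by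
  rcases hab.eq_or_lt with rfl | hlt
  · simp
  set I := ∫ r in a..b, g r
  -- `∫ (g - m)² ≥ 0` for the mean value `m` of `g`
  set m := I / (b - a)
  have hL : b - a ≠ 0 := (sub_pos.mpr hlt).ne'
  have hexpand : (∫ r in a..b, (g r - m) ^ 2)
      = (∫ r in a..b, g r ^ 2) - 2 * m * I + (b - a) * m ^ 2 := by
    have hdiff : IntervalIntegrable (fun r => g r ^ 2 - 2 * m * g r) volume a b :=
      hg2.sub (hg.const_mul _)
    simp_rw [show ∀ r, (g r - m) ^ 2 = (g r ^ 2 - 2 * m * g r) + m ^ 2 from fun r => by ring]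
    rw [intervalIntegral.integral_add hdiff intervalIntegrable_const,
      intervalIntegral.integral_sub hg2 (hg.const_mul _), intervalIntegral.integral_const_mul,
      intervalIntegral.integral_const, smul_eq_mul]
  have hnonneg : 0 ≤ ∫ r in a..b, (g r - m) ^ 2 :=
    intervalIntegral.integral_nonneg hab fun _ _ => sq_nonneg _
  have hm : (b - a) * (2 * m * I - (b - a) * m ^ 2) = I ^ 2 := by
    simp only [m]; field_simp; ring
  nlinarith [sub_pos.mpr hlt]

theorem neg_sq_div_le_sq_div_sub_sq {t : ℝ} (x y : ℝ) (ht0 : 0 < t) (ht1 : t < 1) :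
    -x ^ 2 / t ≤ (y - x) ^ 2 / (1 - t) - y ^ 2 := by
  have h1t : 0 < 1 - t := sub_pos.mpr ht1
  have hgap : (y - x) ^ 2 / (1 - t) - y ^ 2 - -x ^ 2 / t = (t * y - x) ^ 2 / (t * (1 - t)) := by
    field_simp
    ring
  have : 0 ≤ (t * y - x) ^ 2 / (t * (1 - t)) := by positivity
  linarith

def hopfLaxCosts (f : ℝ → ℝ) (t x : ℝ) : Set ℝ :=
  {v : ℝ | ∃ χ χ' : ℝ → ℝ, χ t = x ∧
    (∀ p ∈ Set.Icc t 1, ∀ q ∈ Set.Icc t 1, χ q - χ p = ∫ r in p..q, χ' r) ∧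
    IntervalIntegrable χ' volume t 1 ∧
    IntervalIntegrable (fun r => (χ' r) ^ 2) volume t 1 ∧
    v = (∫ r in t..1, (χ' r) ^ 2) + f (χ 1)}

theorem hstar_eq_sInf_hopfLaxCosts (f : ℝ → ℝ) (t x : ℝ) :
    hstar f t x = sInf (hopfLaxCosts f t x) := rfl

theorem mem_hopfLaxCosts_of_linear (f : ℝ → ℝ) {t : ℝ} (ht : t ≠ 0) (x : ℝ) :
    (1 - t) * (x / t) ^ 2 + f (x / t) ∈ hopfLaxCosts f t x := by
  refine ⟨fun r => x / t * r, fun _ => x / t, by field_simp, fun p _ q _ => ?_,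
    intervalIntegrable_const, intervalIntegrable_const, ?_⟩
  · rw [intervalIntegral.integral_const, smul_eq_mul]; ring
  · simp only [intervalIntegral.integral_const, smul_eq_mul, mul_one]

theorem hopfLaxCosts_nonempty (f : ℝ → ℝ) (t x : ℝ) : (hopfLaxCosts f t x).Nonempty :=
  ⟨_, fun _ => x, fun _ => 0, rfl, fun _ _ _ _ => by simp, intervalIntegrable_const,
    by simp, rfl⟩

theorem neg_sq_div_le_of_mem_hopfLaxCosts {f : ℝ → ℝ} (hge : ∀ y : ℝ, -y ^ 2 ≤ f y)
    {t x v : ℝ} (ht : t ∈ Ioc (0 : ℝ) 1) (hv : v ∈ hopfLaxCosts f t x) :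
    -x ^ 2 / t ≤ v := by
  obtain ⟨χ, χ', rfl, hFTC, hint, hint2, rfl⟩ := hv
  obtain ⟨ht0, ht1⟩ := ht
  rcases ht1.eq_or_lt with rfl | hlt
  · simpa using hge (χ 1)
  have hdisp : χ 1 - χ t = ∫ r in t..1, χ' r := hFTC t ⟨le_rfl, ht1⟩ 1 ⟨ht1, le_rfl⟩
  have henergy : (χ 1 - χ t) ^ 2 / (1 - t) ≤ ∫ r in t..1, χ' r ^ 2 := by
    rw [div_le_iff₀' (sub_pos.mpr hlt), hdisp]
    exact intervalIntegral.sq_integral_le_mul_integral_sq ht1 hint hint2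
  linarith [neg_sq_div_le_sq_div_sub_sq (χ t) (χ 1) ht0 hlt, hge (χ 1)]

theorem hopflax_parabola_general (f : ℝ → ℝ)
    (hge : ∀ x : ℝ, -x ^ 2 ≤ f x) (c : ℝ) (hout : ∀ x : ℝ, c ≤ |x| → f x = -x ^ 2) :
    ∀ t ∈ Ioc (0 : ℝ) 1, ∀ x : ℝ,
      -x ^ 2 / t ≤ hstar f t x ∧ (c * t ≤ |x| → hstar f t x = -x ^ 2 / t) := by
  intro t ht x
  rw [hstar_eq_sInf_hopfLaxCosts]
  have hbound : -x ^ 2 / t ∈ lowerBounds (hopfLaxCosts f t x) :=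
    fun _ => neg_sq_div_le_of_mem_hopfLaxCosts hge ht
  have hlow : -x ^ 2 / t ≤ sInf (hopfLaxCosts f t x) :=
    le_csInf (hopfLaxCosts_nonempty f t x) hbound
  refine ⟨hlow, fun hcx => le_antisymm ?_ hlow⟩
  have ht0 : 0 < t := ht.1
  have hc : c ≤ |x / t| := by rwa [abs_div, abs_of_pos ht0, le_div_iff₀ ht0]
  have hcost : (1 - t) * (x / t) ^ 2 + f (x / t) = -x ^ 2 / t := by
    rw [hout _ hc]; field_simp; ring
  rw [← hcost]
  exact csInf_le ⟨_, hbound⟩ (mem_hopfLaxCosts_of_linear f ht0.ne' x)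

/-- Backward Hopf–Lax preserves agreement with the parabola: if `f ≥ -x²`
everywhere and `f = -x²` for `|x| ≥ c`, then `h*(t,x) ≥ -x²/t` everywhere and
`h*(t,x) = -x²/t` whenever `|x| ≥ ct`. -/
theorem hopflax_parabola (f : ℝ → ℝ) (hf : Continuous f)
    (hge : ∀ x : ℝ, -x ^ 2 ≤ f x) (c : ℝ) (hout : ∀ x : ℝ, c ≤ |x| → f x = -x ^ 2) :
    ∀ t ∈ Ioc (0 : ℝ) 1, ∀ x : ℝ,
      -x ^ 2 / t ≤ hstar f t x ∧ (c * t ≤ |x| → hstar f t x = -x ^ 2 / t) :=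
  hopflax_parabola_general f hge c hout
end
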